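/- arXiv:2007.10853 — 4 statements merged into one kernel-verified Lean document; each statement's English description precedes it below -/
import Mathlib

section
/- Let à be a real m×m matrix with N(Ã) ∩ R(Ã) = {0}, let b ∈ ℝᵐ, let b|_{R(Ã)} denote the orthogonal projection of b onto R(Ã), and assume grade(Ã, b|_{R(Ã)}) = k. Then K_{k+1}(Ã, b|_{R(Ã)}) = Ã·K_k(Ã, b|_{R(Ã)}), i.e., the (k+1)st Krylov subspace generated by b|_{R(Ã)} equals the image under à of the kth Krylov subspace. -/
open Matrix

/-- The `i`-th Krylov subspace `K_i(A, v) = span {v, Av, …, A^{i-1} v}`. -/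
noncomputable def Krylov {m : ℕ} (A : Matrix (Fin m) (Fin m) ℝ)
    (v : EuclideanSpace ℝ (Fin m)) (i : ℕ) : Submodule ℝ (EuclideanSpace ℝ (Fin m)) :=
  Submodule.span ℝ {w | ∃ j < i, w = (A ^ j).toEuclideanLin v}


lemma toEuclideanLin_mul_apply {m : ℕ} (M N : Matrix (Fin m) (Fin m) ℝ)
    (v : EuclideanSpace ℝ (Fin m)) :
    (M * N).toEuclideanLin v = M.toEuclideanLin (N.toEuclideanLin v) := by
  simp [Matrix.toEuclideanLin_apply, Matrix.mulVec_mulVec]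

lemma toEuclideanLin_one_apply {m : ℕ} (v : EuclideanSpace ℝ (Fin m)) :
    (1 : Matrix (Fin m) (Fin m) ℝ).toEuclideanLin v = v := by
  simp [Matrix.toEuclideanLin_apply]

/-- If `N(Ã) ∩ R(Ã) = {0}` and `grade(Ã, b|_{R(Ã)}) = k`, then
`K_{k+1}(Ã, b|_{R(Ã)}) = Ã · K_k(Ã, b|_{R(Ã)})`. -/
theorem krylov_succ_eq_map_of_ker_inf_range_eq_bot
    {m : ℕ} (A : Matrix (Fin m) (Fin m) ℝ) (b bR : EuclideanSpace ℝ (Fin m)) (k : ℕ)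
    (hNR : LinearMap.ker A.toEuclideanLin ⊓ LinearMap.range A.toEuclideanLin = ⊥)
    -- `bR` is the orthogonal projection of `b` onto `R(Ã)`:
    (hbR : bR ∈ LinearMap.range A.toEuclideanLin)
    (hperp : b - bR ∈ (LinearMap.range A.toEuclideanLin)ᗮ)
    -- `grade(Ã, b|_{R(Ã)}) = k`:
    (hgrade : Krylov A bR (k + 1) = Krylov A bR k)
    (hmin : ∀ j < k, Krylov A bR (j + 1) ≠ Krylov A bR j) :
    Krylov A bR (k + 1) = (Krylov A bR k).map A.toEuclideanLin := by
  set f := A.toEuclideanLin with hf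
  set K := Krylov A bR k with hK
  -- Step 1: map f K ≤ K
  have hmaple : K.map f ≤ K := by
    have h1 : K.map f ≤ Krylov A bR (k + 1) := by
      rw [hK, Krylov, Krylov, Submodule.map_span]
      apply Submodule.span_mono
      rintro _ ⟨w, ⟨j, hj, rfl⟩, rfl⟩
      refine ⟨j + 1, by omega, ?_⟩
      rw [pow_succ', toEuclideanLin_mul_apply]
    exact h1.trans (le_of_eq hgrade)
  -- Step 2: K ≤ range f
  have hKrange : K ≤ LinearMap.range f := by
    rw [hK, Krylov, Submodule.span_le]
    rintro w ⟨j, hj, rfl⟩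
    cases j with
    | zero => simpa [pow_zero, toEuclideanLin_one_apply] using hbR
    | succ n =>
      rw [pow_succ', toEuclideanLin_mul_apply]
      exact ⟨(A ^ n).toEuclideanLin bR, rfl⟩
  -- Step 3: f is injective on K
  have hker : LinearMap.ker (f.domRestrict K) = ⊥ := by
    rw [LinearMap.ker_eq_bot']
    rintro ⟨x, hx⟩ hfx
    have hx0 : x ∈ LinearMap.ker f ⊓ LinearMap.range f :=
      ⟨by simpa using hfx, hKrange hx⟩
    rw [hNR] at hx0
    exact Subtype.ext (by simpa using hx0)
  -- Step 4: equal finrank, hence map f K = K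
  have hrange : LinearMap.range (f.domRestrict K) = K.map f := by
    ext x
    simp only [LinearMap.mem_range, LinearMap.domRestrict_apply, Submodule.mem_map]
    constructor
    · rintro ⟨⟨y, hy⟩, rfl⟩; exact ⟨y, hy, rfl⟩
    · rintro ⟨y, hy, rfl⟩; exact ⟨⟨y, hy⟩, rfl⟩
  have hfr : Module.finrank ℝ (K.map f) = Module.finrank ℝ K := by
    have h2 := LinearMap.finrank_range_add_finrank_ker (f.domRestrict K)
    rw [hker, hrange] at h2
    simpa using h2
  have hme : K.map f = K := Submodule.eq_of_le_of_finrank_eq hmaple hfr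
  exact hgrade.trans hme.symm
end

section
/- Let à be a real m×m matrix with N(Ã) = N(Ãᵀ), let b ∈ ℝᵐ, let b|_{R(Ã)} denote the orthogonal projection of b onto R(Ã), and assume grade(Ã, b|_{R(Ã)}) = k. Then K_{k+1}(Ã, b|_{R(Ã)}) = Ã·K_k(Ã, b|_{R(Ã)}). -/
/-! On `R(Ã)` the map `Ã` is injective, because `N(Ã) = N(Ãᵀ) = R(Ã)ᗮ`. The Krylov space
`K_k` of a vector of `R(Ã)` lies in `R(Ã)`, so `Ã` maps it injectively into `K_{k+1}`, which
equals `K_k` by the definition of the grade; comparing dimensions, `Ã · K_k = K_k = K_{k+1}`. -/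

open Matrix

theorem Matrix.toEuclideanLin_transpose_eq_adjoint {n : Type*} [Fintype n] [DecidableEq n]
    (A : Matrix n n ℝ) : Aᵀ.toEuclideanLin = A.toEuclideanLin.adjoint := by
  rw [← conjTranspose_eq_transpose_of_trivial, toEuclideanLin_conjTranspose_eq_adjoint]

theorem LinearMap.disjoint_range_ker_of_ker_eq_ker_adjoint {𝕜 E : Type*} [RCLike 𝕜]
    [NormedAddCommGroup E] [InnerProductSpace 𝕜 E] [FiniteDimensional 𝕜 E] {T : E →ₗ[𝕜] E}
    (h : ker T = ker T.adjoint) : Disjoint (range T) (ker T) := by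
  rw [h, ← orthogonal_range]
  exact Submodule.orthogonal_disjoint _

theorem Submodule.map_eq_self_of_disjoint_ker {K V : Type*} [DivisionRing K] [AddCommGroup V]
    [Module K V] {p : Submodule K V} [FiniteDimensional K p] {f : V →ₗ[K] V}
    (hker : Disjoint p (LinearMap.ker f)) (hle : p.map f ≤ p) : p.map f = p := by
  have hinj : Function.Injective (f.domRestrict p) := by
    rw [← LinearMap.ker_eq_bot, LinearMap.ker_domRestrict, ← disjoint_iff_comap_eq_bot]
    exact hker
  refine eq_of_le_of_finrank_eq hle ?_
  rw [← LinearMap.range_domRestrict, LinearMap.finrank_range_of_inj hinj]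

namespace Krylov

variable {m : ℕ} (A : Matrix (Fin m) (Fin m) ℝ)

theorem le_of_mapsTo {v : EuclideanSpace ℝ (Fin m)} {p : Submodule ℝ (EuclideanSpace ℝ (Fin m))}
    (hp : ∀ x ∈ p, A.toEuclideanLin x ∈ p) (hv : v ∈ p) (i : ℕ) : Krylov A v i ≤ p := by
  rw [Krylov, Submodule.span_le]
  rintro _ ⟨j, -, rfl⟩
  rw [toLpLin_pow]
  exact Module.End.pow_apply_mem_of_forall_mem j hp v hv

theorem le_range {v : EuclideanSpace ℝ (Fin m)} (hv : v ∈ LinearMap.range A.toEuclideanLin)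
    (i : ℕ) : Krylov A v i ≤ LinearMap.range A.toEuclideanLin :=
  le_of_mapsTo A (fun x _ => LinearMap.mem_range_self _ x) hv i

theorem map_le_succ (v : EuclideanSpace ℝ (Fin m)) (i : ℕ) : (Krylov A v i).map A.toEuclideanLin ≤ Krylov A v (i + 1) := by
  rw [Submodule.map_le_iff_le_comap, Krylov, Submodule.span_le]
  rintro _ ⟨j, hj, rfl⟩
  refine Submodule.subset_span ⟨j + 1, by omega, ?_⟩
  rw [pow_succ', toLpLin_mul_same]
  rfl

end Krylov

theorem krylov_succ_eq_map_of_ker_eq_ker_transpose_general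
    {m : ℕ} (A : Matrix (Fin m) (Fin m) ℝ) (bR : EuclideanSpace ℝ (Fin m)) (k : ℕ)
    (hN : LinearMap.ker A.toEuclideanLin = LinearMap.ker Aᵀ.toEuclideanLin)
    -- `bR` is the orthogonal projection of `b` onto `R(Ã)`:
    (hbR : bR ∈ LinearMap.range A.toEuclideanLin)
    -- `grade(Ã, b|_{R(Ã)}) = k`:
    (hgrade : Krylov A bR (k + 1) = Krylov A bR k) :
    Krylov A bR (k + 1) = (Krylov A bR k).map A.toEuclideanLin := by
  rw [toEuclideanLin_transpose_eq_adjoint] at hN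
  have hdisj : Disjoint (Krylov A bR k) (LinearMap.ker A.toEuclideanLin) :=
    (LinearMap.disjoint_range_ker_of_ker_eq_ker_adjoint hN).mono_left (Krylov.le_range A hbR k)
  rw [hgrade, Submodule.map_eq_self_of_disjoint_ker hdisj (hgrade ▸ Krylov.map_le_succ A bR k)]

/-- If `N(Ã) = N(Ãᵀ)` and `grade(Ã, b|_{R(Ã)}) = k`, then
`K_{k+1}(Ã, b|_{R(Ã)}) = Ã · K_k(Ã, b|_{R(Ã)})`. -/
theorem krylov_succ_eq_map_of_ker_eq_ker_transpose
    {m : ℕ} (A : Matrix (Fin m) (Fin m) ℝ) (b bR : EuclideanSpace ℝ (Fin m)) (k : ℕ)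
    (hN : LinearMap.ker A.toEuclideanLin = LinearMap.ker Aᵀ.toEuclideanLin)
    -- `bR` is the orthogonal projection of `b` onto `R(Ã)`:
    (hbR : bR ∈ LinearMap.range A.toEuclideanLin)
    (hperp : b - bR ∈ (LinearMap.range A.toEuclideanLin)ᗮ)
    -- `grade(Ã, b|_{R(Ã)}) = k`:
    (hgrade : Krylov A bR (k + 1) = Krylov A bR k)
    (hmin : ∀ j < k, Krylov A bR (j + 1) ≠ Krylov A bR j) :
    Krylov A bR (k + 1) = (Krylov A bR k).map A.toEuclideanLin :=
  krylov_succ_eq_map_of_ker_eq_ker_transpose_general A bR k hN hbR hgrade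
end

section
/- Let à be a real m×m matrix with N(Ã) = N(Ãᵀ), let b ∈ ℝᵐ with b ∉ R(Ã), let b|_{R(Ã)} denote the orthogonal projection of b onto R(Ã), and assume grade(Ã, b|_{R(Ã)}) = k. Then dim K_{k+1}(Ã, b) = k + 1. -/
/-!
Write `T` for `Ã`. From `N(T) = N(Tᵀ) = R(T)ᗮ` we get `T b = T b|_{R(T)}`, so
`K_{k+1}(T, b) = span {b} ⊔ T(K_k(T, b|_{R(T)}))`. The second summand lies in `R(T)`, which
does not contain `b`, and `T` is injective on `R(T)` because `R(T) ∩ N(T) = 0`. Since the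
Krylov spaces of `b|_{R(T)}` grow strictly up to the grade `k`, `dim K_k(T, b|_{R(T)}) = k`,
so the sum has dimension `k + 1`.
-/

open Matrix

theorem LinearMap.finrank_map_of_disjoint_ker {K V W : Type*} [DivisionRing K]
    [AddCommGroup V] [Module K V] [AddCommGroup W] [Module K W] (f : V →ₗ[K] W)
    {p : Submodule K V} (h : Disjoint p (LinearMap.ker f)) :
    Module.finrank K (p.map f) = Module.finrank K p := by
  rw [← LinearMap.range_domRestrict]
  exact LinearMap.finrank_range_of_inj (LinearMap.injective_domRestrict_iff.mpr h)

theorem Matrix.ker_toEuclideanLin_eq_orthogonal_range {m : ℕ} {A : Matrix (Fin m) (Fin m) ℝ}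
    (hA : LinearMap.ker A.toEuclideanLin = LinearMap.ker Aᵀ.toEuclideanLin) :
    LinearMap.ker A.toEuclideanLin = (LinearMap.range A.toEuclideanLin)ᗮ := by
  rw [LinearMap.orthogonal_range, ← toEuclideanLin_conjTranspose_eq_adjoint,
    conjTranspose_eq_transpose_of_trivial, hA]

namespace Krylov

variable {m : ℕ} (A : Matrix (Fin m) (Fin m) ℝ) (v : EuclideanSpace ℝ (Fin m))

theorem eq_span_range (i : ℕ) :
    Krylov A v i =
      Submodule.span ℝ (Set.range fun j : Fin i => (A.toEuclideanLin ^ (j : ℕ)) v) := by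
  simp only [Krylov, toLpLin_pow]
  congr 1
  ext w
  exact ⟨fun ⟨j, hj, hw⟩ => ⟨⟨j, hj⟩, hw.symm⟩, fun ⟨j, hw⟩ => ⟨j, j.isLt, hw.symm⟩⟩

theorem mono {i j : ℕ} (h : i ≤ j) : Krylov A v i ≤ Krylov A v j := by
  simp only [eq_span_range]
  exact Submodule.span_mono fun _ ⟨l, hl⟩ => ⟨Fin.castLE h l, hl⟩

theorem finrank_le (i : ℕ) : Module.finrank ℝ (Krylov A v i) ≤ i := by
  rw [eq_span_range]
  exact (finrank_range_le_card _).trans_eq (Fintype.card_fin i)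

theorem le_finrank_of_forall_succ_ne {k : ℕ} (h : ∀ j < k, Krylov A v (j + 1) ≠ Krylov A v j) :
    k ≤ Module.finrank ℝ (Krylov A v k) := by
  induction k with
  | zero => exact Nat.zero_le _
  | succ k ih =>
    have hlt : Krylov A v k < Krylov A v (k + 1) :=
      (mono A v k.le_succ).lt_of_ne (h k k.lt_succ_self).symm
    exact (ih fun j hj => h j (hj.trans k.lt_succ_self)).trans_lt
      (Submodule.finrank_lt_finrank_of_lt hlt)

theorem map_toEuclideanLin (i : ℕ) :
    (Krylov A v i).map A.toEuclideanLin = Krylov A (A.toEuclideanLin v) i := by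
  simp only [eq_span_range, Submodule.map_span, ← Set.range_comp]
  congr 2
  funext j
  simp only [Function.comp_apply, ← Module.End.mul_apply, ← pow_succ', pow_succ]

theorem succ_eq_span_singleton_sup (i : ℕ) :
    Krylov A v (i + 1) = Submodule.span ℝ {v} ⊔ Krylov A (A.toEuclideanLin v) i := by
  have hcons : (fun j : Fin (i + 1) => (A.toEuclideanLin ^ (j : ℕ)) v) =
      Fin.cons v fun j : Fin i => (A.toEuclideanLin ^ (j : ℕ)) (A.toEuclideanLin v) := by
    funext j
    refine Fin.cases ?_ (fun j => ?_) j
    · simp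
    · simp [pow_succ, Module.End.mul_apply]
  rw [eq_span_range, eq_span_range, hcons, Fin.range_cons, Submodule.span_insert]

end Krylov

theorem finrank_krylov_succ_of_ker_eq_ker_transpose_general
    {m : ℕ} (A : Matrix (Fin m) (Fin m) ℝ) (b bR : EuclideanSpace ℝ (Fin m)) (k : ℕ)
    (hN : LinearMap.ker A.toEuclideanLin = LinearMap.ker Aᵀ.toEuclideanLin)
    (hb : b ∉ LinearMap.range A.toEuclideanLin)
    -- `bR` is the orthogonal projection of `b` onto `R(Ã)`:
    (hbR : bR ∈ LinearMap.range A.toEuclideanLin)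
    (hperp : b - bR ∈ (LinearMap.range A.toEuclideanLin)ᗮ)
    (hmin : ∀ j < k, Krylov A bR (j + 1) ≠ Krylov A bR j) :
    Module.finrank ℝ (Krylov A b (k + 1)) = k + 1 := by
  set T := A.toEuclideanLin
  have hker : LinearMap.ker T = (LinearMap.range T)ᗮ :=
    ker_toEuclideanLin_eq_orthogonal_range hN
  have hTb : T b = T bR := by
    rw [← sub_eq_zero, ← map_sub, ← LinearMap.mem_ker, hker]
    exact hperp
  obtain ⟨u, rfl⟩ := hbR
  have hKrange : Krylov A (T u) k ≤ LinearMap.range T :=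
    Krylov.map_toEuclideanLin A u k ▸ LinearMap.map_le_range
  have hinj : Disjoint (Krylov A (T u) k) (LinearMap.ker T) :=
    hker ▸ (Submodule.orthogonal_disjoint _).mono_left hKrange
  have hmap : Krylov A (T b) k = (Krylov A (T u) k).map T := by
    rw [hTb, Krylov.map_toEuclideanLin]
  refine (Krylov.finrank_le A b _).antisymm ?_
  rw [Krylov.succ_eq_span_singleton_sup, sup_comm, hmap,
    Submodule.finrank_sup_span_singleton fun h => hb (LinearMap.map_le_range h),
    LinearMap.finrank_map_of_disjoint_ker T hinj]
  exact Nat.succ_le_succ (Krylov.le_finrank_of_forall_succ_ne A _ hmin)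

/-- If `N(Ã) = N(Ãᵀ)`, `b ∉ R(Ã)`, and `grade(Ã, b|_{R(Ã)}) = k`, then
`dim K_{k+1}(Ã, b) = k + 1`. -/
theorem finrank_krylov_succ_of_ker_eq_ker_transpose
    {m : ℕ} (A : Matrix (Fin m) (Fin m) ℝ) (b bR : EuclideanSpace ℝ (Fin m)) (k : ℕ)
    (hN : LinearMap.ker A.toEuclideanLin = LinearMap.ker Aᵀ.toEuclideanLin)
    (hb : b ∉ LinearMap.range A.toEuclideanLin)
    -- `bR` is the orthogonal projection of `b` onto `R(Ã)`:
    (hbR : bR ∈ LinearMap.range A.toEuclideanLin)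
    (hperp : b - bR ∈ (LinearMap.range A.toEuclideanLin)ᗮ)
    -- `grade(Ã, b|_{R(Ã)}) = k`:
    (hgrade : Krylov A bR (k + 1) = Krylov A bR k)
    (hmin : ∀ j < k, Krylov A bR (j + 1) ≠ Krylov A bR j) :
    Module.finrank ℝ (Krylov A b (k + 1)) = k + 1 :=
  finrank_krylov_succ_of_ker_eq_ker_transpose_general A b bR k hN hb hbR hperp hmin
end

section
/- (Brown–Walker effective condition number bound.) Let à be a real m×m matrix with N(Ã) = N(Ãᵀ), let b, x₀ ∈ ℝᵐ, r₀ = b − Ãx₀, and let r* = b − b|_{R(Ã)} be the least squares residual of min_x ‖b − Ãx‖₂. For i ≥ 1 let r_{i−1} be the GMRES residual at the (i−1)st iteration, i.e., r_{i−1} = r₀ − Ãz_{i−1} where z_{i−1} minimizes ‖r₀ − Ãz‖₂ over z ∈ K_{i−1}(Ã, r₀), and assume r_{i−1} ≠ r*. Let S = K_i(Ã, r₀) and S̄ = K_i(Ã, r₀) + span{r*}, and define for a subspace W the quantities σ_max(Ã|_W) = sup{‖Ãz‖₂ : z ∈ W, ‖z‖₂ = 1}, σ_min(Ã|_W) = inf{‖Ãz‖₂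 : z ∈ W, ‖z‖₂ = 1}, and κ₂(Ã|_W) = σ_max(Ã|_W)/σ_min(Ã|_W). Then κ₂(Ã|_S) ≥ (σ_max(Ã|_S)/σ_max(Ã|_{S̄})) · ‖r_{i−1}‖₂ / √(‖r_{i−1}‖₂² − ‖r*‖₂²). -/
open Matrix

/-- `σ_max(Ã|_W) = sup {‖Ãz‖ : z ∈ W, ‖z‖ = 1}`. -/
noncomputable def sigmaMax {m : ℕ} (A : Matrix (Fin m) (Fin m) ℝ)
    (W : Submodule ℝ (EuclideanSpace ℝ (Fin m))) : ℝ :=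
  sSup {t | ∃ z ∈ W, ‖z‖ = 1 ∧ t = ‖A.toEuclideanLin z‖}

/-- `σ_min(Ã|_W) = inf {‖Ãz‖ : z ∈ W, ‖z‖ = 1}`. -/
noncomputable def sigmaMin {m : ℕ} (A : Matrix (Fin m) (Fin m) ℝ)
    (W : Submodule ℝ (EuclideanSpace ℝ (Fin m))) : ℝ :=
  sInf {t | ∃ z ∈ W, ‖z‖ = 1 ∧ t = ‖A.toEuclideanLin z‖}

/-!
Since `N(Ã) = N(Ãᵀ) = R(Ã)ᗮ`, the least squares residual `r*` lies in the kernel of `Ã`, and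
every residual `r₀ − Ãw` differs from `r*` by an element of `R(Ã)`. Hence
`‖r₀ − Ãw‖² = ‖r*‖² + ‖r₀ − Ãw − r*‖²`, so `√(‖r‖² − ‖r*‖²) = ‖r − r*‖` for `r = r_{i−1}`, and `r*`
is the only residual of norm `≤ ‖r*‖`. As `r ∈ S` and `r − r* ∈ S̄`,
`σ_min(Ã|_S) ‖r‖ ≤ ‖Ãr‖ = ‖Ã(r − r*)‖ ≤ σ_max(Ã|_S̄) ‖r − r*‖`.
It remains to see `σ_min(Ã|_S) > 0`. A null vector `c r₀ + Ãw` of `S` (with `w ∈ K_{i−1}`) is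
orthogonal to `R(Ã)` and congruent to `c r*` modulo `R(Ã)`, so it equals `c r*`; if it is nonzero
then `r*` is the residual of `−c⁻¹ w ∈ K_{i−1}`, and the minimality of `r` forces `r = r*`.
-/

section Orthogonal

variable {E : Type*} [NormedAddCommGroup E] [InnerProductSpace ℝ E] {K : Submodule ℝ E} {x y : E}

theorem Submodule.norm_sq_eq_add_norm_sq_of_sub_mem (hy : y ∈ Kᗮ) (h : x - y ∈ K) :
    ‖x‖ ^ 2 = ‖y‖ ^ 2 + ‖x - y‖ ^ 2 := by
  have := norm_add_sq_eq_norm_sq_add_norm_sq_real (Submodule.inner_left_of_mem_orthogonal h hy)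
  rw [add_sub_cancel] at this
  rw [sq, sq, sq, this]

theorem Submodule.eq_of_sub_mem_of_mem_orthogonal (hx : x ∈ Kᗮ) (hy : y ∈ Kᗮ) (h : x - y ∈ K) :
    x = y :=
  sub_eq_zero.mp (Submodule.disjoint_def.mp K.orthogonal_disjoint _ h (sub_mem hx hy))

theorem Submodule.eq_of_norm_le_of_sub_mem (hy : y ∈ Kᗮ) (h : x - y ∈ K) (hle : ‖x‖ ≤ ‖y‖) :
    x = y := by
  have hpyth := Submodule.norm_sq_eq_add_norm_sq_of_sub_mem hy h
  have : ‖x - y‖ ^ 2 = 0 := by nlinarith [norm_nonneg x, sq_nonneg ‖x - y‖]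
  simpa [sub_eq_zero] using this

end Orthogonal

theorem Matrix.ker_toEuclideanLin_transpose {m n : Type*} [Fintype m] [DecidableEq m] [Fintype n]
    [DecidableEq n] (A : Matrix m n ℝ) :
    LinearMap.ker Aᵀ.toEuclideanLin = (LinearMap.range A.toEuclideanLin)ᗮ := by
  rw [LinearMap.orthogonal_range, ← toEuclideanLin_conjTranspose_eq_adjoint,
    conjTranspose_eq_transpose_of_trivial]

theorem LinearMap.sub_apply_sub_mem_range {R M N : Type*} [Ring R] [AddCommGroup M]
    [AddCommGroup N] [Module R M] [Module R N] (T : M →ₗ[R] N) {r₀ r : N}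
    (h : r₀ - r ∈ LinearMap.range T) (w : M) : r₀ - T w - r ∈ LinearMap.range T := by
  rw [sub_right_comm]
  exact sub_mem h (LinearMap.mem_range_self T w)

section Krylov

variable {m : ℕ} (A : Matrix (Fin m) (Fin m) ℝ) (v : EuclideanSpace ℝ (Fin m))

theorem pow_toEuclideanLin_mem_krylov {i j : ℕ} (h : j < i) :
    (A ^ j).toEuclideanLin v ∈ Krylov A v i :=
  Submodule.subset_span ⟨j, h, rfl⟩

theorem self_mem_krylov {i : ℕ} (hi : 0 < i) : v ∈ Krylov A v i := by
  simpa using pow_toEuclideanLin_mem_krylov A v hi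

variable {A v}

theorem toEuclideanLin_mem_krylov_succ {i : ℕ} {x : EuclideanSpace ℝ (Fin m)}
    (hx : x ∈ Krylov A v i) : A.toEuclideanLin x ∈ Krylov A v (i + 1) := by
  induction hx using Submodule.span_induction with
  | mem w hw =>
    obtain ⟨j, hj, rfl⟩ := hw
    simpa [pow_succ'] using pow_toEuclideanLin_mem_krylov A v (Nat.succ_lt_succ hj)
  | zero => simp
  | add a b _ _ ha hb => rw [map_add]; exact add_mem ha hb
  | smul c a _ ha => rw [map_smul]; exact Submodule.smul_mem _ c ha

theorem krylov_succ_le (i : ℕ) :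
    Krylov A v (i + 1) ≤ Submodule.span ℝ {v} ⊔ (Krylov A v i).map A.toEuclideanLin := by
  rw [Krylov, Submodule.span_le]
  rintro _ ⟨j, hj, rfl⟩
  cases j with
  | zero => simpa using Submodule.mem_sup_left (Submodule.mem_span_singleton_self v)
  | succ k =>
    have := Submodule.mem_map_of_mem (f := A.toEuclideanLin)
      (pow_toEuclideanLin_mem_krylov A v (show k < i by omega))
    simpa [pow_succ'] using Submodule.mem_sup_right (S := Submodule.span ℝ {v}) this

theorem exists_eq_smul_add_of_mem_krylov_succ {i : ℕ} {x : EuclideanSpace ℝ (Fin m)}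
    (hx : x ∈ Krylov A v (i + 1)) :
    ∃ c : ℝ, ∃ w ∈ Krylov A v i, c • v + A.toEuclideanLin w = x := by
  obtain ⟨_, hy, _, hw, rfl⟩ := Submodule.mem_sup.mp (krylov_succ_le i hx)
  obtain ⟨c, rfl⟩ := Submodule.mem_span_singleton.mp hy
  obtain ⟨w, hw', rfl⟩ := Submodule.mem_map.mp hw
  exact ⟨c, w, hw', rfl⟩

end Krylov

section Sigma

variable {m : ℕ} {A : Matrix (Fin m) (Fin m) ℝ} {W : Submodule ℝ (EuclideanSpace ℝ (Fin m))}
  {x : EuclideanSpace ℝ (Fin m)}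

theorem inv_norm_mul_norm_toEuclideanLin_mem (hx : x ∈ W) (hx0 : x ≠ 0) :
    ‖x‖⁻¹ * ‖A.toEuclideanLin x‖ ∈ {t | ∃ z ∈ W, ‖z‖ = 1 ∧ t = ‖A.toEuclideanLin z‖} :=
  ⟨‖x‖⁻¹ • x, W.smul_mem _ hx, norm_smul_inv_norm hx0, by
    rw [map_smul, norm_smul, norm_inv, norm_norm]⟩

theorem sigmaMax_nonneg : 0 ≤ sigmaMax A W :=
  Real.sSup_nonneg fun _ ⟨_, _, _, ht⟩ => ht ▸ norm_nonneg _

theorem norm_toEuclideanLin_le_sigmaMax_mul (hx : x ∈ W) :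
    ‖A.toEuclideanLin x‖ ≤ sigmaMax A W * ‖x‖ := by
  rcases eq_or_ne x 0 with rfl | hx0
  · simp
  have hbdd : BddAbove {t | ∃ z ∈ W, ‖z‖ = 1 ∧ t = ‖A.toEuclideanLin z‖} := by
    refine ⟨‖LinearMap.toContinuousLinearMap A.toEuclideanLin‖, ?_⟩
    rintro _ ⟨z, -, hz, rfl⟩
    simpa [hz] using (LinearMap.toContinuousLinearMap A.toEuclideanLin).le_opNorm z
  have := le_csSup hbdd (inv_norm_mul_norm_toEuclideanLin_mem hx hx0)
  rwa [inv_mul_le_iff₀ (norm_pos_iff.mpr hx0), mul_comm] at this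

theorem sigmaMin_mul_norm_le (hx : x ∈ W) : sigmaMin A W * ‖x‖ ≤ ‖A.toEuclideanLin x‖ := by
  rcases eq_or_ne x 0 with rfl | hx0
  · simp
  have hbdd : BddBelow {t | ∃ z ∈ W, ‖z‖ = 1 ∧ t = ‖A.toEuclideanLin z‖} :=
    ⟨0, fun _ ⟨_, _, _, ht⟩ => ht ▸ norm_nonneg _⟩
  have := csInf_le hbdd (inv_norm_mul_norm_toEuclideanLin_mem hx hx0)
  rwa [le_inv_mul_iff₀ (norm_pos_iff.mpr hx0), mul_comm] at this

theorem sigmaMin_pos (hW : W ≠ ⊥) (hker : Disjoint W (LinearMap.ker A.toEuclideanLin)) :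
    0 < sigmaMin A W := by
  obtain ⟨x, hx, hx0⟩ := W.ne_bot_iff.mp hW
  have hcompact : IsCompact ((W : Set (EuclideanSpace ℝ (Fin m))) ∩ Metric.sphere 0 1) :=
    (isCompact_sphere 0 1).inter_left W.closed_of_finiteDimensional
  have hne : ((W : Set (EuclideanSpace ℝ (Fin m))) ∩ Metric.sphere 0 1).Nonempty :=
    ⟨_, W.smul_mem _ hx, by simpa using norm_smul_inv_norm (𝕜 := ℝ) hx0⟩
  obtain ⟨u, ⟨huW, hu⟩, hmin⟩ := hcompact.exists_isMinOn hne
    (LinearMap.continuous_of_finiteDimensional A.toEuclideanLin).norm.continuousOn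
  have hu0 : u ≠ 0 := by rintro rfl; simp at hu
  have hAu : 0 < ‖A.toEuclideanLin u‖ :=
    norm_pos_iff.mpr fun h => hu0 (Submodule.disjoint_def.mp hker u huW h)
  refine hAu.trans_le (le_csInf ⟨_, u, huW, by simpa using hu, rfl⟩ ?_)
  rintro _ ⟨z, hzW, hz, rfl⟩
  exact hmin ⟨hzW, by simpa using hz⟩

end Sigma

theorem krylov_succ_disjoint_ker {m : ℕ} {A : Matrix (Fin m) (Fin m) ℝ}
    {r0 rstar z : EuclideanSpace ℝ (Fin m)} {k : ℕ}
    (hker : LinearMap.ker A.toEuclideanLin ≤ (LinearMap.range A.toEuclideanLin)ᗮ)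
    (hrstar : rstar ∈ (LinearMap.range A.toEuclideanLin)ᗮ)
    (hr0 : r0 - rstar ∈ LinearMap.range A.toEuclideanLin)
    (hzmin : ∀ w ∈ Krylov A r0 k, ‖r0 - A.toEuclideanLin z‖ ≤ ‖r0 - A.toEuclideanLin w‖)
    (hne : r0 - A.toEuclideanLin z ≠ rstar) :
    Disjoint (Krylov A r0 (k + 1)) (LinearMap.ker A.toEuclideanLin) := by
  set R := LinearMap.range A.toEuclideanLin
  refine Submodule.disjoint_def.mpr fun x hx hAx => ?_
  obtain ⟨c, w, hw, rfl⟩ := exists_eq_smul_add_of_mem_krylov_succ hx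
  have hx_eq : c • r0 + A.toEuclideanLin w = c • rstar := by
    refine Submodule.eq_of_sub_mem_of_mem_orthogonal (hker hAx) (Rᗮ.smul_mem c hrstar) ?_
    have : c • r0 + A.toEuclideanLin w - c • rstar = c • (r0 - rstar) + A.toEuclideanLin w := by
      rw [smul_sub]; abel
    rw [this]
    exact add_mem (R.smul_mem c hr0) (LinearMap.mem_range_self _ w)
  rcases eq_or_ne c 0 with rfl | hc
  · simpa using hx_eq
  have hrstar_res : r0 - A.toEuclideanLin (-c⁻¹ • w) = rstar := by
    have := congrArg (c⁻¹ • ·) hx_eq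
    simp only [smul_add, smul_smul, inv_mul_cancel₀ hc, one_smul] at this
    rw [map_smul, neg_smul, sub_neg_eq_add, ← this]
  refine absurd (Submodule.eq_of_norm_le_of_sub_mem hrstar
    (A.toEuclideanLin.sub_apply_sub_mem_range hr0 z) ?_) hne
  have := hzmin _ (Submodule.smul_mem _ (-c⁻¹) hw)
  rwa [hrstar_res] at this

theorem div_mul_div_le_div_of_mul_le {a b c x y : ℝ} (ha : 0 ≤ a) (hb : 0 < b) (hc : 0 ≤ c)
    (hy : 0 ≤ y) (h : b * x ≤ c * y) : a / c * (x / y) ≤ a / b := by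
  rcases hc.eq_or_lt with rfl | hc
  · simpa using div_nonneg ha hb.le
  rcases hy.eq_or_lt with rfl | hy
  · simpa using div_nonneg ha hb.le
  rw [div_mul_div_comm, div_le_div_iff₀ (mul_pos hc hy) hb]
  nlinarith

/-- Brown–Walker effective condition number bound:
`κ₂(Ã|_S) ≥ (σ_max(Ã|_S)/σ_max(Ã|_S̄)) · ‖r_{i−1}‖ / √(‖r_{i−1}‖² − ‖r*‖²)`. -/
theorem brown_walker_effective_condition_number_bound
    {m : ℕ} (A : Matrix (Fin m) (Fin m) ℝ) (b x0 r0 bR rstar : EuclideanSpace ℝ (Fin m))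
    (i : ℕ) (hi : 1 ≤ i) (z r : EuclideanSpace ℝ (Fin m))
    (hN : LinearMap.ker A.toEuclideanLin = LinearMap.ker Aᵀ.toEuclideanLin)
    (hr0 : r0 = b - A.toEuclideanLin x0)
    -- `bR` is the orthogonal projection of `b` onto `R(Ã)`, and `r* = b − b|_{R(Ã)}`:
    (hbR : bR ∈ LinearMap.range A.toEuclideanLin)
    (hperp : b - bR ∈ (LinearMap.range A.toEuclideanLin)ᗮ)
    (hrstar : rstar = b - bR)
    -- `z = z_{i−1}` minimizes `‖r₀ − Ãz‖₂` over `K_{i−1}(Ã, r₀)`, and `r_{i−1} = r₀ − Ãz`: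
    (hz : z ∈ Krylov A r0 (i - 1))
    (hzmin : ∀ w ∈ Krylov A r0 (i - 1), ‖r0 - A.toEuclideanLin z‖ ≤ ‖r0 - A.toEuclideanLin w‖)
    (hr : r = r0 - A.toEuclideanLin z)
    (hne : r ≠ rstar) :
    sigmaMax A (Krylov A r0 i) / sigmaMin A (Krylov A r0 i) ≥
      (sigmaMax A (Krylov A r0 i) /
          sigmaMax A (Krylov A r0 i ⊔ Submodule.span ℝ {rstar})) *
        (‖r‖ / Real.sqrt (‖r‖ ^ 2 - ‖rstar‖ ^ 2)) := by
  obtain ⟨k, rfl⟩ : ∃ k, i = k + 1 := ⟨i - 1, by omega⟩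
  rw [Nat.add_sub_cancel] at hz hzmin
  set T := A.toEuclideanLin
  have hker : LinearMap.ker T = (LinearMap.range T)ᗮ := hN.trans (ker_toEuclideanLin_transpose A)
  have hrstar_perp : rstar ∈ (LinearMap.range T)ᗮ := hrstar ▸ hperp
  have hr0_sub : r0 - rstar ∈ LinearMap.range T := by
    obtain ⟨y, rfl⟩ := hbR
    exact ⟨y - x0, by rw [hr0, hrstar, map_sub]; abel⟩
  have hr_sub : r - rstar ∈ LinearMap.range T := hr ▸ T.sub_apply_sub_mem_range hr0_sub z
  have hsqrt : Real.sqrt (‖r‖ ^ 2 - ‖rstar‖ ^ 2) = ‖r - rstar‖ := by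
    rw [Submodule.norm_sq_eq_add_norm_sq_of_sub_mem hrstar_perp hr_sub, add_sub_cancel_left,
      Real.sqrt_sq (norm_nonneg _)]
  have hrS : r ∈ Krylov A r0 (k + 1) :=
    hr ▸ sub_mem (self_mem_krylov A r0 k.succ_pos) (toEuclideanLin_mem_krylov_succ hz)
  have hT_r : T (r - rstar) = T r := by rw [map_sub, hker.ge hrstar_perp, sub_zero]
  have hr_ne : r ≠ 0 := fun h0 => hne (Submodule.eq_of_norm_le_of_sub_mem hrstar_perp hr_sub
    (by simp [h0]))
  have hmin_pos := sigmaMin_pos ((Submodule.ne_bot_iff _).mpr ⟨r, hrS, hr_ne⟩)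
    (krylov_succ_disjoint_ker hker.le hrstar_perp hr0_sub hzmin (hr ▸ hne))
  have hgain : sigmaMin A (Krylov A r0 (k + 1)) * ‖r‖ ≤
      sigmaMax A (Krylov A r0 (k + 1) ⊔ Submodule.span ℝ {rstar}) * ‖r - rstar‖ :=
    (sigmaMin_mul_norm_le hrS).trans (hT_r ▸ norm_toEuclideanLin_le_sigmaMax_mul
      (sub_mem (Submodule.mem_sup_left hrS)
        (Submodule.mem_sup_right (Submodule.mem_span_singleton_self rstar))))
  rw [ge_iff_le, hsqrt]
  exact div_mul_div_le_div_of_mul_le sigmaMax_nonneg hmin_pos sigmaMax_nonneg (norm_nonneg _) hgain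
end
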